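/- arXiv:1703.07181 — 2 statements merged into one kernel-verified Lean document; each statement's English description precedes it below -/
import Mathlib

section
/- Over a field of characteristic 0, for the n-th Sierpinski matrix B_n, rank((B_n - I)^k) equals the sum of the (k+1)-th through (n+1)-th largest elements of the multiset {C(n, j) : 0 ≤ j ≤ n}. -/
def sierpinski (F : Type*) [Zero F] [One F] : (n : ℕ) → Matrix (Fin (2 ^ n)) (Fin (2 ^ n)) F
  | 0 => 1
  | n + 1 =>
    Matrix.reindex (finSumFinEquiv.trans (finCongr (by rw [pow_succ, mul_two])))
      (finSumFinEquiv.trans (finCongr (by rw [pow_succ, mul_two])))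
      (Matrix.fromBlocks (sierpinski F n) (sierpinski F n) 0 (sierpinski F n))

section Combinatorics

/-- window start -/
def aIdx (n k : ℕ) : ℕ := (n + 1 - k) / 2

/-- the index of the (k+1)-th largest binomial coefficient in row n -/
def cIdx (n k : ℕ) : ℕ := if (n - k) % 2 = 0 then (n + 1 - k) / 2 + k else (n - k) / 2

/-- sum of all but the k largest binomial coefficients of row n -/
def sVal (n k : ℕ) : ℕ :=
  (Finset.range (aIdx n k)).sum n.choose + (Finset.Ico (aIdx n k + k) (n + 1)).sum n.choose

lemma eta_sum (n : ℕ) (s : Finset ℕ) : (∑ x ∈ s, n.choose x) = s.sum n.choose := rfl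

lemma sVal_zero (n : ℕ) : sVal n 0 = 2 ^ n := by
  rw [sVal, aIdx, add_zero, Finset.sum_range_add_sum_Ico _ (by omega), Nat.sum_range_choose]

lemma sVal_of_gt (n k : ℕ) (h : n + 1 ≤ k) : sVal n k = 0 := by
  rw [sVal, aIdx]
  have h1 : (n + 1 - k) / 2 = 0 := by omega
  rw [h1]
  simp only [Finset.range_zero, Finset.sum_empty, zero_add]
  rw [Finset.Ico_eq_empty (by omega), Finset.sum_empty]

lemma sVal_step (n k : ℕ) (hk : k ≤ n) :
    sVal n k = n.choose (cIdx n k) + sVal n (k + 1) := by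
  rcases Nat.even_or_odd (n - k) with ⟨t, ht⟩ | ⟨t, ht⟩
  · -- n - k = 2t
    have ha1 : aIdx n k = t := by rw [aIdx]; omega
    have ha2 : aIdx n (k + 1) = t := by rw [aIdx]; omega
    have hc : cIdx n k = t + k := by rw [cIdx, if_pos (by omega)]; omega
    rw [sVal, sVal, ha1, ha2, hc, show t + (k + 1) = t + k + 1 from rfl,
      Finset.sum_eq_sum_Ico_succ_bot (show t + k < n + 1 by omega)]
    have h1 := eta_sum n (Finset.Ico (t + k + 1) (n + 1))
    have h2 := eta_sum n (Finset.range t)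
    omega
  · -- n - k = 2t + 1
    have ha1 : aIdx n k = t + 1 := by rw [aIdx]; omega
    have ha2 : aIdx n (k + 1) = t := by rw [aIdx]; omega
    have hc : cIdx n k = t := by rw [cIdx, if_neg (by omega)]; omega
    rw [sVal, sVal, ha1, ha2, hc, Finset.sum_range_succ,
      show t + 1 + k = t + (k + 1) from by omega]
    have h1 := eta_sum n (Finset.range t)
    have h2 := eta_sum n (Finset.Ico (t + (k + 1)) (n + 1))
    omega

lemma prefix_pascal (n : ℕ) : ∀ a : ℕ,
    (Finset.range a).sum (n + 1).choose
      = (Finset.range a).sum n.choose + (Finset.range (a - 1)).sum n.choose := by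
  intro a
  induction a with
  | zero => simp
  | succ a ih =>
    rw [Finset.sum_range_succ, ih]
    cases a with
    | zero => simp
    | succ b =>
      have h1 : (n + 1).choose (b + 1) = n.choose b + n.choose (b + 1) :=
        Nat.choose_succ_succ n b
      rw [Finset.sum_range_succ n.choose (b + 1), show b + 1 + 1 - 1 = b + 1 from rfl,
        show b + 1 - 1 = b from rfl, Finset.sum_range_succ n.choose b]
      have h2 := eta_sum n (Finset.range (b + 1))
      have h3 := eta_sum n (Finset.range b)
      omega

lemma sVal_rec (n k : ℕ) : sVal (n + 1) (k + 1) = sVal n k + sVal n (k + 2) := by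
  rcases le_or_gt (k + 1) n with hk | hk
  · -- main case : k + 1 ≤ n
    set a := (n + 1 - k) / 2 with ha
    have ha1 : aIdx (n + 1) (k + 1) = a := by rw [aIdx]; omega
    have ha2 : aIdx n k = a := by rw [aIdx]
    have ha3 : aIdx n (k + 2) = a - 1 := by rw [aIdx]; omega
    have hage : 1 ≤ a := by omega
    have hP := prefix_pascal n a
    -- Q lemmas via complements
    have q1 : (Finset.range (a + k + 1)).sum (n + 1).choose
        + (Finset.Ico (a + k + 1) (n + 2)).sum (n + 1).choose = 2 ^ (n + 1) := by
      rw [Finset.sum_range_add_sum_Ico _ (by omega), Nat.sum_range_choose]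
    have q2 : (Finset.range (a + k)).sum n.choose
        + (Finset.Ico (a + k) (n + 1)).sum n.choose = 2 ^ n := by
      rw [Finset.sum_range_add_sum_Ico _ (by omega), Nat.sum_range_choose]
    have q3 : (Finset.range (a + k + 1)).sum n.choose
        + (Finset.Ico (a + k + 1) (n + 1)).sum n.choose = 2 ^ n := by
      rw [Finset.sum_range_add_sum_Ico _ (by omega), Nat.sum_range_choose]
    have hP2 := prefix_pascal n (a + k + 1)
    have hsplit1 : (Finset.range (a + k + 1 - 1)).sum n.choose
        = (Finset.range (a + k)).sum n.choose := rfl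
    have e1 : sVal (n + 1) (k + 1)
        = (Finset.range a).sum (n + 1).choose
          + (Finset.Ico (a + (k + 1)) (n + 2)).sum (n + 1).choose := by
      rw [sVal, ha1]
    have e2 : sVal n k = (Finset.range a).sum n.choose
          + (Finset.Ico (a + k) (n + 1)).sum n.choose := by rw [sVal, ha2]
    have e3 : sVal n (k + 2) = (Finset.range (a - 1)).sum n.choose
          + (Finset.Ico (a - 1 + (k + 2)) (n + 1)).sum n.choose := by rw [sVal, ha3]
    have hidx1 : a + (k + 1) = a + k + 1 := by omega
    have hidx2 : a - 1 + (k + 2) = a + k + 1 := by omega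
    rw [e1, e2, e3, hidx1, hidx2, hP]
    omega
  · -- k ≥ n
    rcases Nat.eq_or_lt_of_le hk with hkn | hkn
    · -- k = n
      obtain rfl : n = k := by omega
      have h1 : sVal (n + 1) (n + 1) = 1 := by
        rw [sVal, aIdx]
        have h0 : (n + 1 + 1 - (n + 1)) / 2 = 0 := by omega
        rw [h0]
        simp only [Finset.range_zero, Finset.sum_empty, zero_add]
        rw [Finset.sum_eq_sum_Ico_succ_bot (by omega), Finset.Ico_eq_empty (by omega),
          Finset.sum_empty, Nat.choose_self, add_zero]
      have h2 : sVal n n = 1 := by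
        rw [sVal, aIdx]
        have h0 : (n + 1 - n) / 2 = 0 := by omega
        rw [h0]
        simp only [Finset.range_zero, Finset.sum_empty, zero_add]
        rw [Finset.sum_eq_sum_Ico_succ_bot (by omega), Finset.Ico_eq_empty (by omega),
          Finset.sum_empty, Nat.choose_self, add_zero]
      rw [h1, h2, sVal_of_gt n (n + 2) (by omega)]
    · rw [sVal_of_gt (n + 1) (k + 1) (by omega), sVal_of_gt n k (by omega),
        sVal_of_gt n (k + 2) (by omega)]

lemma cIdx_le (n k : ℕ) (hk : k ≤ n) : cIdx n k ≤ n := by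
  rw [cIdx]; split <;> omega

lemma cIdx_inj (n : ℕ) {k k' : ℕ} (hk : k ≤ n) (hk' : k' ≤ n) (h : cIdx n k = cIdx n k') :
    k = k' := by
  rw [cIdx, cIdx] at h
  split at h <;> split at h <;> omega

def sortedRow (n : ℕ) : List ℕ := (List.range (n + 1)).map (fun k => n.choose (cIdx n k))

lemma perm_row (n : ℕ) : ((List.range (n + 1)).map n.choose).Perm (sortedRow n) := by
  have hnd : ((List.range (n + 1)).map (cIdx n)).Nodup := by
    apply List.Nodup.map_on _ List.nodup_range
    intro x hx y hy hxy
    rw [List.mem_range] at hx hy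
    exact cIdx_inj n (by omega) (by omega) hxy
  have hidx : ((List.range (n + 1)).map (cIdx n)).Perm (List.range (n + 1)) := by
    apply List.perm_of_nodup_nodup_toFinset_eq hnd List.nodup_range
    apply Finset.eq_of_subset_of_card_le
    · intro x hx
      rw [List.mem_toFinset, List.mem_map] at hx
      obtain ⟨b, hb, rfl⟩ := hx
      rw [List.mem_range] at hb
      rw [List.mem_toFinset, List.mem_range]
      have := cIdx_le n b (by omega)
      omega
    · rw [List.toFinset_card_of_nodup hnd, List.toFinset_card_of_nodup List.nodup_range,
        List.length_map, List.length_range]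
  have hmm : sortedRow n = ((List.range (n + 1)).map (cIdx n)).map n.choose := by
    rw [List.map_map]; rfl
  rw [hmm]
  exact (hidx.map n.choose).symm

lemma choose_cIdx_anti (n m : ℕ) (hm : m < n) :
    n.choose (cIdx n (m + 1)) ≤ n.choose (cIdx n m) := by
  rcases Nat.even_or_odd (n - m) with ⟨t, ht⟩ | ⟨t, ht⟩
  · have h1 : cIdx n m = t + m := by rw [cIdx, if_pos (by omega)]; omega
    have h2 : cIdx n (m + 1) = t - 1 := by rw [cIdx, if_neg (by omega)]; omega
    rw [h1, h2, show t + m = n - t by omega, Nat.choose_symm (by omega)]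
    have hle := Nat.choose_le_succ_of_lt_half_left (r := t - 1) (n := n) (by omega)
    rwa [show t - 1 + 1 = t by omega] at hle
  · have h1 : cIdx n m = t := by rw [cIdx, if_neg (by omega)]; omega
    have h2 : cIdx n (m + 1) = t + m + 1 := by rw [cIdx, if_pos (by omega)]; omega
    rw [h1, h2, show t + m + 1 = n - t by omega, Nat.choose_symm (by omega)]

lemma sorted_row (n : ℕ) :
    List.Pairwise (fun a b : ℕ => decide (b ≤ a) = true) (sortedRow n) := by
  have htr : IsTrans ℕ (fun a b : ℕ => decide (b ≤ a) = true) := by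
    constructor
    intro a b c h1 h2
    simp only [decide_eq_true_eq] at h1 h2 ⊢
    omega
  rw [← List.isChain_iff_pairwise, sortedRow, List.isChain_map,
    show n + 1 = Nat.succ n from rfl, List.isChain_range_succ]
  intro m hm
  simp only [decide_eq_true_eq]
  exact choose_cIdx_anti n m hm

lemma mergeSort_row (n : ℕ) :
    ((List.range (n + 1)).map n.choose).mergeSort (fun a b => decide (b ≤ a)) = sortedRow n := by
  have ha : IsAntisymm ℕ (fun a b : ℕ => decide (b ≤ a) = true) := by
    constructor
    intro a b h1 h2
    simp only [decide_eq_true_eq] at h1 h2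
    omega
  refine (fun hp h1 h2 => List.Perm.eq_of_pairwise' (r := fun a b : ℕ => decide (b ≤ a) = true) h1 h2 hp) ?_ ?_ ?_
  · exact (List.mergeSort_perm _ _).trans (perm_row n)
  · exact List.pairwise_mergeSort
      (by intro a b c h1 h2; simp only [decide_eq_true_eq] at h1 h2 ⊢; omega)
      (by intro a b; simp only [Bool.or_eq_true, decide_eq_true_eq]; omega) _
  · exact sorted_row n

lemma dropSum_row (n : ℕ) : ∀ k, ((sortedRow n).drop k).sum = sVal n k := by
  suffices H : ∀ d k, n + 1 - k = d → ((sortedRow n).drop k).sum = sVal n k from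
    fun k => H _ k rfl
  intro d
  induction d with
  | zero =>
    intro k hk
    have hlen : (sortedRow n).length = n + 1 := by
      rw [sortedRow, List.length_map, List.length_range]
    rw [List.drop_eq_nil_of_le (by omega), List.sum_nil, sVal_of_gt n k (by omega)]
  | succ d ih =>
    intro k hk
    have hklen : k < (sortedRow n).length := by
      rw [sortedRow, List.length_map, List.length_range]; omega
    rw [List.drop_eq_getElem_cons hklen, List.sum_cons]
    have hget : (sortedRow n)[k] = n.choose (cIdx n k) := by
      simp [sortedRow]
    rw [hget, ih (k + 1) (by omega), ← sVal_step n k (by omega)]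

end Combinatorics

section LinAlgCore

open LinearMap Submodule Module

variable {F V : Type*} [Field F] [AddCommGroup V] [Module F V] [FiniteDimensional F V]

private lemma ker_le_ker_pow (f : V →ₗ[F] V) (q : ℕ) : ker f ≤ ker (f ^ (q + 1)) := by
  intro x hx
  simp only [mem_ker] at hx ⊢
  rw [pow_succ, Module.End.mul_apply, hx, map_zero]

private lemma finrank_map_ker_pow (f : V →ₗ[F] V) (q : ℕ) :
    finrank F (map f (ker (f ^ (q + 1)))) + finrank F (ker f) = finrank F (ker (f ^ (q + 1))) := by
  have h := LinearMap.finrank_range_add_finrank_ker (f.domRestrict (ker (f ^ (q + 1))))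
  rw [LinearMap.range_domRestrict] at h
  have hker : finrank F (LinearMap.ker (f.domRestrict (ker (f ^ (q + 1))))) = finrank F (ker f) := by
    rw [LinearMap.ker_domRestrict]
    exact LinearEquiv.finrank_eq (Submodule.comapSubtypeEquivOfLe (ker_le_ker_pow f q))
  rw [hker] at h
  exact h

set_option linter.unusedSectionVars false

private lemma inf_ker_map (f : V →ₗ[F] V) (p : ℕ) :
    ker (f ^ p) ⊓ map f (ker (f ^ (p + 2))) = map f (ker (f ^ (p + 1))) := by
  ext y
  simp only [Submodule.mem_inf, Submodule.mem_map, mem_ker]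
  constructor
  · rintro ⟨hy, u, hu, rfl⟩
    refine ⟨u, ?_, rfl⟩
    have : (f ^ (p + 1)) u = (f ^ p) (f u) := by
      rw [pow_succ, Module.End.mul_apply]
    rw [this, hy]
  · rintro ⟨u, hu, rfl⟩
    refine ⟨?_, u, ?_, rfl⟩
    · have : (f ^ p) (f u) = (f ^ (p + 1)) u := by rw [pow_succ, Module.End.mul_apply]
      rw [this, hu]
    · have : (f ^ (p + 2)) u = f ((f ^ (p + 1)) u) := by
        rw [show p + 2 = (p + 1) + 1 from rfl, pow_succ']
        rfl
      rw [this, hu, map_zero]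

private lemma finrank_W (f : V →ₗ[F] V) (p : ℕ) :
    finrank F ↥(ker (f ^ p) ⊔ map f (ker (f ^ (p + 2)))) + finrank F ↥(ker (f ^ (p + 1)))
      = finrank F (ker (f ^ p)) + finrank F (ker (f ^ (p + 2))) := by
  have h := Submodule.finrank_sup_add_finrank_inf_eq (ker (f ^ p)) (map f (ker (f ^ (p + 2))))
  rw [inf_ker_map] at h
  have h1 := finrank_map_ker_pow f (p + 1)
  rw [show p + 1 + 1 = p + 2 from rfl] at h1
  have h2 := finrank_map_ker_pow f p
  omega

private def gmap (f : V →ₗ[F] V) (p : ℕ) : (V × V) →ₗ[F] (V × V) :=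
  LinearMap.prod
    ((f ^ (p + 1)).comp (LinearMap.fst F V V) + (f ^ p).comp (LinearMap.snd F V V))
    ((f ^ (p + 1)).comp (LinearMap.snd F V V))

private lemma gmap_apply (f : V →ₗ[F] V) (p : ℕ) (x y : V) :
    gmap f p (x, y) = ((f ^ (p + 1)) x + (f ^ p) y, (f ^ (p + 1)) y) := rfl

private lemma mem_ker_gmap (f : V →ₗ[F] V) (p : ℕ) (x y : V) :
    (x, y) ∈ ker (gmap f p) ↔ (f ^ (p + 1)) x + (f ^ p) y = 0 ∧ (f ^ (p + 1)) y = 0 := by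
  rw [mem_ker, gmap_apply, Prod.mk.injEq]
  rfl

private lemma pow_apply_succ (f : V →ₗ[F] V) (q : ℕ) (x : V) :
    (f ^ (q + 1)) x = (f ^ q) (f x) := by rw [pow_succ, Module.End.mul_apply]

private lemma pow_apply_succ' (f : V →ₗ[F] V) (q : ℕ) (x : V) :
    (f ^ (q + 1)) x = f ((f ^ q) x) := by rw [pow_succ', Module.End.mul_apply]

private lemma finrank_ker_gmap (f : V →ₗ[F] V) (p : ℕ) :
    finrank F ↥(ker (gmap f p)) = finrank F ↥(ker (f ^ p)) + finrank F ↥(ker (f ^ (p + 2))) := by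
  set K := ker (gmap f p) with hK
  set ψ : K →ₗ[F] V := (LinearMap.snd F V V).comp K.subtype with hψ
  have hrn := LinearMap.finrank_range_add_finrank_ker ψ
  -- range ψ = ker (f^p) ⊔ map f (ker (f^(p+2)))
  have hrange : range ψ = ker (f ^ p) ⊔ map f (ker (f ^ (p + 2))) := by
    ext y
    constructor
    · rintro ⟨⟨⟨x, y'⟩, hxy⟩, rfl⟩
      rw [mem_ker_gmap] at hxy
      obtain ⟨h1, h2⟩ := hxy
      show y' ∈ _
      have hz : (f ^ p) y' = (f ^ (p + 1)) (-x) := by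
        rw [map_neg]
        exact eq_neg_of_add_eq_zero_right h1
      refine Submodule.mem_sup.2 ⟨y' - f (-x), ?_, f (-x), ?_, by abel⟩
      · rw [mem_ker, map_sub, hz, ← pow_apply_succ, sub_self]
      · refine Submodule.mem_map.2 ⟨-x, ?_, rfl⟩
        rw [mem_ker, show p + 2 = (p + 1) + 1 from rfl, pow_apply_succ' f (p + 1) (-x),
          ← hz, ← pow_apply_succ' f p y']
        exact h2
    · intro hy
      obtain ⟨u, hu, fw, hfw, rfl⟩ := Submodule.mem_sup.1 hy
      obtain ⟨w, hw, rfl⟩ := Submodule.mem_map.1 hfw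
      rw [mem_ker] at hu hw
      have hmem : (-w, u + f w) ∈ K := by
        rw [mem_ker_gmap]
        constructor
        · rw [map_neg, map_add, ← pow_apply_succ f p w, hu]
          abel
        · rw [map_add, ← pow_apply_succ f (p + 1) w, show (p + 1) + 1 = p + 2 from rfl, hw,
            pow_apply_succ' f p u, hu, map_zero, add_zero]
      exact ⟨⟨_, hmem⟩, rfl⟩
  -- ker ψ has dimension of ker (f^(p+1))
  have hle : Submodule.map (LinearMap.inl F V V) (ker (f ^ (p + 1))) ≤ K := by
    intro a ha
    obtain ⟨x, hx, rfl⟩ := Submodule.mem_map.1 ha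
    rw [mem_ker] at hx
    show ((x, 0) : V × V) ∈ K
    rw [mem_ker_gmap]
    exact ⟨by rw [hx, map_zero, add_zero], map_zero _⟩
  have hker_eq : ker ψ = Submodule.comap K.subtype
      (Submodule.map (LinearMap.inl F V V) (ker (f ^ (p + 1)))) := by
    ext a
    obtain ⟨⟨x, y⟩, hm⟩ := a
    constructor
    · intro h
      have hy : y = 0 := h
      subst hy
      have hmk := (mem_ker_gmap f p x 0).1 hm
      refine Submodule.mem_comap.2 (Submodule.mem_map.2 ⟨x, ?_, rfl⟩)
      rw [mem_ker]
      have := hmk.1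
      rwa [map_zero, add_zero] at this
    · intro h
      obtain ⟨x', hx', hEq⟩ := Submodule.mem_map.1 (Submodule.mem_comap.1 h)
      have h0 : ((x', 0) : V × V) = (x, y) := hEq
      have hy : y = 0 := (congrArg Prod.snd h0).symm
      show ψ ⟨(x, y), hm⟩ = 0
      exact hy
  have hkerψ : finrank F ↥(ker ψ) = finrank F ↥(ker (f ^ (p + 1))) := by
    rw [hker_eq]
    rw [LinearEquiv.finrank_eq (Submodule.comapSubtypeEquivOfLe hle)]
    exact (LinearEquiv.finrank_eq
      (Submodule.equivMapOfInjective (LinearMap.inl F V V) LinearMap.inl_injective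
        (ker (f ^ (p + 1))))).symm
  rw [hrange, hkerψ] at hrn
  have hW := finrank_W f p
  omega

private lemma finrank_range_gmap (f : V →ₗ[F] V) (p : ℕ) :
    finrank F ↥(range (gmap f p)) = finrank F ↥(range (f ^ p)) + finrank F ↥(range (f ^ (p + 2))) := by
  have h0 := LinearMap.finrank_range_add_finrank_ker (gmap f p)
  have h1 := LinearMap.finrank_range_add_finrank_ker (f ^ p)
  have h2 := LinearMap.finrank_range_add_finrank_ker (f ^ (p + 2))
  have hk := finrank_ker_gmap f p
  have hprod : finrank F (V × V) = finrank F V + finrank F V := Module.finrank_prod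
  omega

section MatrixBridge

open Matrix

variable {m : Type*} [Fintype m] [DecidableEq m]

private def epsLin : ((m ⊕ m) → F) →ₗ[F] ((m → F) × (m → F)) :=
  LinearMap.prod (LinearMap.funLeft F F Sum.inl) (LinearMap.funLeft F F Sum.inr)

private def epsInv : ((m → F) × (m → F)) →ₗ[F] ((m ⊕ m) → F) where
  toFun x := Sum.elim x.1 x.2
  map_add' x y := by funext s; cases s <;> rfl
  map_smul' c x := by funext s; cases s <;> rfl

private def eps : ((m ⊕ m) → F) ≃ₗ[F] ((m → F) × (m → F)) :=
  LinearEquiv.ofLinear epsLin epsInv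
    (by ext x s <;> rfl)
    (by apply LinearMap.ext; intro v; funext s; cases s <;> rfl)

private lemma mulVecLin_conj (P Q R : Matrix m m F) :
    (fromBlocks P Q 0 R).mulVecLin =
      (eps (F := F) (m := m)).symm.toLinearMap ∘ₗ
        (LinearMap.prod
          (P.mulVecLin.comp (LinearMap.fst F (m → F) (m → F)) +
            Q.mulVecLin.comp (LinearMap.snd F (m → F) (m → F)))
          (R.mulVecLin.comp (LinearMap.snd F (m → F) (m → F)))) ∘ₗ
        (eps (F := F) (m := m)).toLinearMap := by
  apply LinearMap.ext
  intro v
  show (fromBlocks P Q 0 R) *ᵥ v = _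
  rw [fromBlocks_mulVec]
  have : (eps (F := F) (m := m)) v = (v ∘ Sum.inl, v ∘ Sum.inr) := rfl
  simp only [LinearMap.comp_apply, this]
  show _ = (eps (F := F) (m := m)).symm
    (P *ᵥ (v ∘ Sum.inl) + Q *ᵥ (v ∘ Sum.inr), R *ᵥ (v ∘ Sum.inr))
  have hsymm : ∀ x : (m → F) × (m → F), (eps (F := F) (m := m)).symm x = Sum.elim x.1 x.2 := by
    intro x; rfl
  rw [hsymm]
  have h0 : (0 : Matrix m m F) *ᵥ (v ∘ Sum.inl) = 0 := by simp
  rw [h0, zero_add]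

private lemma mulVecLin_pow (A : Matrix m m F) (q : ℕ) :
    (A ^ q).mulVecLin = (A.mulVecLin) ^ q := by
  induction q with
  | zero => simp [pow_zero, Matrix.mulVecLin_one]; rfl
  | succ q ih => rw [pow_succ, Matrix.mulVecLin_mul, ih, pow_succ]; rfl

private lemma rank_eq_finrank_range (A : Matrix m m F) :
    A.rank = finrank F ↥(range A.mulVecLin) := rfl

private lemma rank_blockMatrix (A : Matrix m m F) (p : ℕ) :
    (fromBlocks (A ^ (p + 1)) (A ^ p) 0 (A ^ (p + 1))).rank
      = (A ^ p).rank + (A ^ (p + 2)).rank := by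
  rw [rank_eq_finrank_range, rank_eq_finrank_range, rank_eq_finrank_range]
  rw [mulVecLin_conj]
  have hg : (LinearMap.prod
      ((A ^ (p + 1)).mulVecLin.comp (LinearMap.fst F (m → F) (m → F)) +
        (A ^ p).mulVecLin.comp (LinearMap.snd F (m → F) (m → F)))
      ((A ^ (p + 1)).mulVecLin.comp (LinearMap.snd F (m → F) (m → F))))
      = gmap (A.mulVecLin) p := by
    rw [gmap, mulVecLin_pow, mulVecLin_pow]
  rw [hg]
  have hrange : range ((eps (F := F) (m := m)).symm.toLinearMap ∘ₗ
      (gmap (A.mulVecLin) p) ∘ₗ (eps (F := F) (m := m)).toLinearMap)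
      = Submodule.map ((eps (F := F) (m := m)).symm :
          ((m → F) × (m → F)) →ₗ[F] ((m ⊕ m) → F)) (range (gmap (A.mulVecLin) p)) := by
    rw [LinearMap.range_comp, LinearMap.range_comp_of_range_eq_top _ (LinearEquiv.range _)]
  rw [hrange, LinearEquiv.finrank_map_eq, finrank_range_gmap, mulVecLin_pow, mulVecLin_pow]

end MatrixBridge

end LinAlgCore

section SierpMat
open Matrix

variable {F : Type*} [Field F]

lemma det_sierpinski (n : ℕ) : (sierpinski F n).det = 1 := by
  induction n with
  | zero => simp [sierpinski]
  | succ n ih =>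
    rw [sierpinski, reindex_apply, Matrix.det_submatrix_equiv_self,
      det_fromBlocks_zero₂₁, ih, one_mul]

lemma blockpow {ι : Type*} [Fintype ι] [DecidableEq ι] (A B : Matrix ι ι F)
    (h : Commute A B) (k : ℕ) :
    (fromBlocks A B 0 A) ^ (k + 1)
      = fromBlocks (A ^ (k + 1)) ((k + 1) • (A ^ k * B)) 0 (A ^ (k + 1)) := by
  induction k with
  | zero => simp
  | succ k ih =>
    rw [pow_succ', ih, fromBlocks_multiply, mul_zero, add_zero, zero_mul, mul_zero, add_zero,
      zero_mul, zero_add, ← pow_succ']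
    congr 1
    rw [mul_smul_comm, ← mul_assoc, ← pow_succ', (h.symm.pow_right (k + 1)).eq, succ_nsmul, succ_nsmul]
    rw [succ_nsmul]

lemma commute_A_C {ι : Type*} [Fintype ι] [DecidableEq ι] (A : Matrix ι ι F) (c : F) (q : ℕ) :
    Commute (A ^ q) (c • (A + 1)) :=
  (((Commute.refl A).add_right (Commute.one_right A)).pow_left q).smul_right c

lemma rank_conj_block {ι : Type*} [Fintype ι] [DecidableEq ι] (A : Matrix ι ι F) (k : ℕ)
    (hchar : ((k : F) + 1) ≠ 0) (hdet : IsUnit (A + 1).det) :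
    (fromBlocks (A ^ (k + 1)) ((k + 1) • (A ^ k * (A + 1))) 0 (A ^ (k + 1))).rank
      = (fromBlocks (A ^ (k + 1)) (A ^ k) 0 (A ^ (k + 1))).rank := by
  set C : Matrix ι ι F := ((k : F) + 1) • (A + 1) with hC
  have hdetC : IsUnit C.det := by
    rw [hC, Matrix.det_smul]
    exact (IsUnit.pow _ (Ne.isUnit hchar)).mul hdet
  have hCinv : C⁻¹ * C = 1 := Matrix.nonsing_inv_mul C hdetC
  have hcomm : Commute (A ^ (k + 1)) C := hC ▸ commute_A_C A ((k : F) + 1) (k + 1)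
  have h2 : C⁻¹ * (A ^ (k + 1) * C) = A ^ (k + 1) := by
    rw [hcomm.eq, ← Matrix.mul_assoc, hCinv, Matrix.one_mul]
  have h3 : (k + 1) • (A ^ k * (A + 1)) = A ^ k * C := by
    rw [hC, Matrix.mul_smul, ← Nat.cast_smul_eq_nsmul F, Nat.cast_add, Nat.cast_one]
  have key : fromBlocks (A ^ (k + 1)) ((k + 1) • (A ^ k * (A + 1))) 0 (A ^ (k + 1))
      = fromBlocks 1 0 0 C⁻¹ * fromBlocks (A ^ (k + 1)) (A ^ k) 0 (A ^ (k + 1))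
          * fromBlocks 1 0 0 C := by
    rw [fromBlocks_multiply, fromBlocks_multiply]
    simp only [Matrix.one_mul, Matrix.mul_one, Matrix.zero_mul, Matrix.mul_zero,
      add_zero, zero_add, Matrix.mul_assoc]
    rw [h2, h3]
  rw [key, Matrix.rank_mul_eq_left_of_isUnit_det, Matrix.rank_mul_eq_right_of_isUnit_det]
  · rw [det_fromBlocks_zero₂₁, Matrix.det_one, one_mul, Matrix.det_nonsing_inv]
    exact (isUnit_ringInverse).2 hdetC
  · rw [det_fromBlocks_zero₂₁, Matrix.det_one, one_mul]
    exact hdetC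

variable [CharZero F]

lemma rank_sierpinski_step (n k : ℕ) :
    ((sierpinski F (n + 1) - 1) ^ (k + 1)).rank
      = ((sierpinski F n - 1) ^ k).rank + ((sierpinski F n - 1) ^ (k + 2)).rank := by
  set S := sierpinski F n with hSdef
  set A := S - 1 with hA
  have hS : A + 1 = S := by rw [hA, sub_add_cancel]
  set e : (Fin (2 ^ n) ⊕ Fin (2 ^ n)) ≃ Fin (2 ^ (n + 1)) :=
    finSumFinEquiv.trans (finCongr (by rw [pow_succ, mul_two])) with he
  have hdef : sierpinski F (n + 1) = reindex e e (fromBlocks S S 0 S) := rfl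
  have hmap : reindex e e ((fromBlocks S S 0 S - 1) ^ (k + 1))
      = (sierpinski F (n + 1) - 1) ^ (k + 1) := by
    rw [hdef, show (reindex e e (fromBlocks S S 0 S) : Matrix _ _ F)
        = Matrix.reindexAlgEquiv F F e (fromBlocks S S 0 S) from rfl,
      ← map_one (Matrix.reindexAlgEquiv F F e), ← map_sub, ← map_pow]
    rfl
  rw [← hmap, Matrix.rank_reindex]
  have hblocks : fromBlocks S S 0 S - (1 : Matrix _ _ F) = fromBlocks A S 0 A := by
    rw [← fromBlocks_one]
    ext i j
    rcases i with i | i <;> rcases j with j | j <;>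
      simp [hA, Matrix.sub_apply, Matrix.one_apply, Sum.inl.injEq, Sum.inr.injEq]
  rw [hblocks, blockpow A S (by rw [← hS]; exact (Commute.refl A).add_right (Commute.one_right A)), ← hS,
    rank_conj_block A k (by have h5 : ((k + 1 : ℕ) : F) ≠ 0 := Nat.cast_ne_zero.2 (Nat.succ_ne_zero k); push_cast at h5; exact h5) (by rw [hS, hSdef]; rw [det_sierpinski]; exact isUnit_one),
    rank_blockMatrix]

end SierpMat

section Final

open Matrix

variable {F : Type*} [Field F] [CharZero F]

lemma rank_eq_sVal (n : ℕ) : ∀ k, ((sierpinski F n - 1) ^ k).rank = sVal n k := by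
  induction n with
  | zero =>
    intro k
    cases k with
    | zero =>
      simp only [pow_zero]
      rw [Matrix.rank_one]
      rw [Fintype.card_fin, sVal_zero]
    | succ k =>
      rw [show sierpinski F 0 = (1 : Matrix (Fin (2 ^ 0)) (Fin (2 ^ 0)) F) from rfl, sub_self,
        zero_pow (Nat.succ_ne_zero k), Matrix.rank_zero, sVal_of_gt 0 (k + 1) (by omega)]
  | succ n ih =>
    intro k
    cases k with
    | zero =>
      simp only [pow_zero]
      rw [Matrix.rank_one]
      rw [Fintype.card_fin, sVal_zero]
    | succ k => rw [rank_sierpinski_step n k, ih k, ih (k + 2), sVal_rec]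

end Final

/-- `rank((B n - I)^k)` equals the sum of all but the `k` largest entries of the multiset
of binomial coefficients `C(n, j)`, `0 ≤ j ≤ n`, sorted in non-increasing order. -/
theorem sierpinski_rank_pow_eq_drop_sum {F : Type*} [Field F] [CharZero F] (n : ℕ) :
    ∀ k : ℕ,
      ((sierpinski F n - 1) ^ k).rank =
        ((((List.range (n + 1)).map n.choose).mergeSort fun a b => decide (b ≤ a)).drop k).sum := by
  intro k
  rw [mergeSort_row n, dropSum_row n k]
  exact rank_eq_sVal n k
end

section
/- Let A = F[x_1, ..., x_n]/(x_1², ..., x_n²) over a field F of characteristic 0, with grading A = ⊕_{k=0}^n A_k where A_k is spanned by square-free monomials of degree k, and let l = x_1 + ... + x_n. Then for all 0 ≤ k ≤ ⌊n/2⌋, the multiplication map ×l^(n-2k) : A_k → A_{n-k} is bijective. -/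
/-- The quadratic monomial complete intersection `F[x_1,…,x_n]/(x_1²,…,x_n²)`. -/
def SquareFreeAlgebra (F : Type*) [Field F] (n : ℕ) :=
  MvPolynomial (Fin n) F ⧸
    Ideal.span (Set.range fun i : Fin n => (MvPolynomial.X i : MvPolynomial (Fin n) F) ^ 2)

noncomputable instance (F : Type*) [Field F] (n : ℕ) : CommRing (SquareFreeAlgebra F n) :=
  Ideal.Quotient.commRing _

noncomputable instance (F : Type*) [Field F] (n : ℕ) : Algebra F (SquareFreeAlgebra F n) :=
  Ideal.Quotient.algebra F

/-- The image of the variable `x i` in `F[x_1,…,x_n]/(x_1²,…,x_n²)`. -/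
noncomputable def sfVar {F : Type*} [Field F] {n : ℕ} (i : Fin n) : SquareFreeAlgebra F n :=
  Ideal.Quotient.mk _ (MvPolynomial.X i)

/-- The degree-`k` homogeneous component `A_k` of `A = F[x_1,…,x_n]/(x_1²,…,x_n²)`:
the span of the square-free monomials of degree `k`. -/
noncomputable def sfGrade (F : Type*) [Field F] (n k : ℕ) :
    Submodule F (SquareFreeAlgebra F n) :=
  Submodule.span F ((fun s : Finset (Fin n) => ∏ i ∈ s, sfVar i) '' {s | s.card = k})

/-!
The square-free monomials `x_S` form a basis of `A`, so `A_k` is the space of functions on the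
`k`-subsets of `{1, …, n}`, and multiplication by `l` becomes the up operator
`U f (T) = ∑_{j ∈ T} f (T \ {j})` of the Boolean lattice. Its partner, the down operator `D`,
satisfies `D U - U D = n - 2k` on functions on `k`-subsets, hence
`D U^(m+1) = U^(m+1) D + (m+1)(n-2k-m) U^m`. In characteristic zero these coefficients do not
vanish for `m < n - 2k`, which lets one peel off powers of `U` and, by induction on `k`, shows that
`U^(n-2k)` is injective on `A_k`. Complementation `S ↦ Sᶜ` gives `dim A_k = dim A_(n-k)`.
-/

namespace BooleanLattice

variable {R : Type*} [CommRing R] {α : Type*}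

variable (R α) in
def grade (k : ℕ) : Submodule R (Finset α → R) where
  carrier := {f | ∀ s : Finset α, s.card ≠ k → f s = 0}
  add_mem' hf hg s hs := by simp [hf s hs, hg s hs]
  zero_mem' _ _ := rfl
  smul_mem' c f hf s hs := by simp [hf s hs]

variable {f : Finset α → R} {k : ℕ}

lemma mem_grade : f ∈ grade R α k ↔ ∀ s : Finset α, s.card ≠ k → f s = 0 := Iff.rfl

variable [DecidableEq α]

def up : (Finset α → R) →ₗ[R] (Finset α → R) where
  toFun f t := ∑ j ∈ t, f (t.erase j)
  map_add' f g := by funext t; simp [Finset.sum_add_distrib]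
  map_smul' c f := by funext t; simp [Finset.mul_sum]

@[simp]
lemma up_apply (f : Finset α → R) (t : Finset α) : up f t = ∑ j ∈ t, f (t.erase j) := rfl

lemma up_pow_succ_apply (m : ℕ) (f : Finset α → R) : (up ^ (m + 1)) f = up ((up ^ m) f) := by
  rw [pow_succ', Module.End.mul_apply]

lemma up_mem_grade (hf : f ∈ grade R α k) : up f ∈ grade R α (k + 1) := by
  intro t ht
  refine Finset.sum_eq_zero fun j hj => hf _ ?_
  have : 0 < t.card := Finset.card_pos.mpr ⟨j, hj⟩
  rw [Finset.card_erase_of_mem hj]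
  omega

lemma up_pow_mem_grade (hf : f ∈ grade R α k) (m : ℕ) : (up ^ m) f ∈ grade R α (k + m) := by
  induction m with
  | zero => simpa using hf
  | succ m ih =>
    rw [up_pow_succ_apply, ← add_assoc]
    exact up_mem_grade ih

variable [Fintype α]

def down : (Finset α → R) →ₗ[R] (Finset α → R) where
  toFun f s := ∑ i ∈ sᶜ, f (insert i s)
  map_add' f g := by funext s; simp [Finset.sum_add_distrib]
  map_smul' c f := by funext s; simp [Finset.mul_sum]

@[simp]
lemma down_apply (f : Finset α → R) (s : Finset α) : down f s = ∑ i ∈ sᶜ, f (insert i s) := rfl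

lemma down_mem_grade (hf : f ∈ grade R α (k + 1)) : down f ∈ grade R α k := by
  intro s hs
  refine Finset.sum_eq_zero fun i hi => hf _ ?_
  rw [Finset.card_insert_of_notMem (Finset.mem_compl.mp hi)]
  omega

lemma down_eq_zero_of_mem_grade_zero (hf : f ∈ grade R α 0) : down f = 0 := by
  funext s
  exact Finset.sum_eq_zero fun i _ =>
    hf _ (Finset.card_ne_zero_of_mem (Finset.mem_insert_self i s))

/-- Both sides count the pairs `(i ∈ sᶜ, j ∈ s)` through `f (insert i (s.erase j))`; they differ
only in the terms where the element added and the element removed coincide. -/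
lemma down_up_apply (f : Finset α → R) (s : Finset α) :
    down (up f) s = up (down f) s + ((sᶜ.card : R) - s.card) * f s := by
  have hdown_up :
      down (up f) s = ∑ i ∈ sᶜ, (f s + ∑ j ∈ s, f (insert i (s.erase j))) := by
    refine Finset.sum_congr rfl fun i hi => ?_
    have his : i ∉ s := Finset.mem_compl.mp hi
    rw [up_apply, Finset.sum_insert his, Finset.erase_insert his]
    congr 1
    refine Finset.sum_congr rfl fun j hj => ?_
    rw [Finset.erase_insert_of_ne (ne_of_mem_of_not_mem hj his).symm]
  have hup_down :
      up (down f) s = ∑ j ∈ s, (f s + ∑ i ∈ sᶜ, f (insert i (s.erase j))) := by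
    refine Finset.sum_congr rfl fun j hj => ?_
    rw [down_apply, Finset.compl_erase, Finset.sum_insert (by simp [hj]),
      Finset.insert_erase hj]
  rw [hdown_up, hup_down, Finset.sum_add_distrib, Finset.sum_add_distrib, Finset.sum_const,
    Finset.sum_const, Finset.sum_comm, nsmul_eq_mul, nsmul_eq_mul]
  ring

lemma down_up_of_mem_grade (hf : f ∈ grade R α k) :
    down (up f) = up (down f) + ((Fintype.card α : R) - 2 * k) • f := by
  funext s
  rw [down_up_apply, Pi.add_apply, Pi.smul_apply, smul_eq_mul]
  by_cases hs : s.card = k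
  · rw [Finset.card_compl, Nat.cast_sub (hs ▸ Finset.card_le_univ s), hs]
    ring
  · simp [hf s hs]

lemma down_up_pow_of_mem_grade (hf : f ∈ grade R α k) (m : ℕ) :
    down ((up ^ (m + 1)) f) = (up ^ (m + 1)) (down f)
      + (((m : R) + 1) * ((Fintype.card α : R) - 2 * k - m)) • (up ^ m) f := by
  induction m with
  | zero => simpa using down_up_of_mem_grade hf
  | succ m ih =>
    rw [up_pow_succ_apply (m + 1), down_up_of_mem_grade (up_pow_mem_grade hf (m + 1)), ih,
      map_add, map_smul, ← up_pow_succ_apply, ← up_pow_succ_apply, add_assoc, ← add_smul]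
    congr 2
    push_cast
    ring

lemma sum_sum_compl_insert {M : Type*} [AddCommMonoid M] (g : Finset α → Finset α → M) :
    ∑ s, ∑ i ∈ sᶜ, g s (insert i s) = ∑ t, ∑ j ∈ t, g (t.erase j) t := by
  rw [Finset.sum_sigma', Finset.sum_sigma']
  refine Finset.sum_nbij' (fun p => ⟨insert p.2 p.1, p.2⟩) (fun p => ⟨p.1.erase p.2, p.2⟩)
    ?_ ?_ ?_ ?_ ?_ <;> rintro ⟨s, i⟩ <;> simp +contextual

lemma map_linearCombination_grade {M : Type*} [AddCommMonoid M] [Module R M]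
    (v : Finset α → M) (k : ℕ) :
    (grade R α k).map (Fintype.linearCombination R v)
      = Submodule.span R (v '' {s | s.card = k}) := by
  apply le_antisymm
  · rintro _ ⟨f, hf, rfl⟩
    rw [Fintype.linearCombination_apply]
    refine Submodule.sum_mem _ fun s _ => ?_
    by_cases hs : s.card = k
    · exact Submodule.smul_mem _ _ (Submodule.subset_span ⟨s, hs, rfl⟩)
    · rw [hf s hs, zero_smul]
      exact Submodule.zero_mem _
  · rw [Submodule.span_le]
    rintro _ ⟨s, hs, rfl⟩
    exact ⟨Pi.single s 1, fun t ht => Pi.single_eq_of_ne (by rintro rfl; exact ht hs) _, by simp⟩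

lemma eq_zero_of_down_eq_zero_of_up_pow_eq_zero [NoZeroDivisors R] [CharZero R]
    (hf : f ∈ grade R α k) (hdown : down f = 0) {m : ℕ} (hm : 2 * k + m ≤ Fintype.card α)
    (hup : (up ^ m) f = 0) : f = 0 := by
  induction m with
  | zero => simpa using hup
  | succ m ih =>
    refine ih (by omega) ?_
    have hcomm := down_up_pow_of_mem_grade hf m
    rw [hup, hdown, map_zero, map_zero, zero_add] at hcomm
    obtain ⟨d, hd⟩ : ∃ d, Fintype.card α = 2 * k + m + 1 + d :=
      ⟨_, (Nat.add_sub_of_le hm).symm⟩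
    have hcoeff :
        ((m : R) + 1) * ((Fintype.card α : R) - 2 * k - m) = ((m + 1) * (d + 1) : ℕ) := by
      rw [hd]
      push_cast
      ring
    rw [hcoeff] at hcomm
    exact (smul_eq_zero.mp hcomm.symm).resolve_left (Nat.cast_ne_zero.mpr (by positivity))

lemma eq_zero_of_up_pow_eq_zero [NoZeroDivisors R] [CharZero R] (hf : f ∈ grade R α k)
    (hk : 2 * k ≤ Fintype.card α) (hup : (up ^ (Fintype.card α - 2 * k)) f = 0) : f = 0 := by
  induction k generalizing f with
  | zero =>
    exact eq_zero_of_down_eq_zero_of_up_pow_eq_zero hf (down_eq_zero_of_mem_grade_zero hf)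
      (by omega) hup
  | succ k ih =>
    set m := Fintype.card α - 2 * (k + 1)
    have hcomm := down_up_pow_of_mem_grade hf m
    rw [up_pow_succ_apply, hup, map_zero, smul_zero, add_zero, map_zero] at hcomm
    have hdown : down f = 0 := by
      refine ih (down_mem_grade hf) (by omega) ?_
      rw [show Fintype.card α - 2 * k = m + 1 + 1 by omega, up_pow_succ_apply, ← hcomm,
        map_zero]
    exact eq_zero_of_down_eq_zero_of_up_pow_eq_zero hf hdown (by omega) hup

lemma comap_funCongrLeft_compl_grade (hk : k ≤ Fintype.card α) :
    (grade R α (Fintype.card α - k)).comap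
      (LinearEquiv.funCongrLeft R R (compl_involutive.toPerm _)).toLinearMap = grade R α k := by
  ext f
  simp only [Submodule.mem_comap, mem_grade, LinearEquiv.coe_coe,
    LinearEquiv.funCongrLeft_apply, LinearMap.funLeft_apply, Function.Involutive.coe_toPerm]
  rw [compl_surjective.forall (p := fun s => s.card ≠ k → f s = 0)]
  refine forall_congr' fun s => ?_
  have : s.card ≤ Fintype.card α := s.card_le_univ
  rw [Finset.card_compl]
  exact imp_congr_left (by omega)

lemma finrank_grade_card_sub (hk : k ≤ Fintype.card α) :
    Module.finrank R (grade R α (Fintype.card α - k)) = Module.finrank R (grade R α k) :=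
  ((LinearEquiv.ofSubmodule' _ _).symm.trans
    (LinearEquiv.ofEq _ _ (comap_funCongrLeft_compl_grade hk))).finrank_eq

variable {F : Type*} [Field F] [CharZero F]

noncomputable def upPowEquiv (hk : 2 * k ≤ Fintype.card α) :
    grade F α k ≃ₗ[F] grade F α (Fintype.card α - k) :=
  LinearMap.linearEquivOfInjective
    ((up ^ (Fintype.card α - 2 * k)).restrict fun f hf => by
      simpa [show k + (Fintype.card α - 2 * k) = Fintype.card α - k by omega]
        using up_pow_mem_grade hf (Fintype.card α - 2 * k))
    (by
      rw [← LinearMap.ker_eq_bot, Submodule.eq_bot_iff]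
      rintro ⟨f, hf⟩ hup
      exact Subtype.ext
        (eq_zero_of_up_pow_eq_zero hf hk (congrArg Subtype.val (LinearMap.mem_ker.mp hup))))
    (finrank_grade_card_sub (by omega)).symm

lemma coe_upPowEquiv_apply (hk : 2 * k ≤ Fintype.card α) (f : grade F α k) :
    (upPowEquiv hk f : Finset α → F) = (up ^ (Fintype.card α - 2 * k)) f :=
  rfl

end BooleanLattice

open MvPolynomial BooleanLattice

section SquarefreeExponent

variable {σ R : Type*}

noncomputable def sqfreeExponent (s : Finset σ) : σ →₀ ℕ := ∑ i ∈ s, Finsupp.single i 1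

lemma sqfreeExponent_apply [DecidableEq σ] (s : Finset σ) (j : σ) :
    sqfreeExponent s j = if j ∈ s then 1 else 0 := by
  simp [sqfreeExponent, Finsupp.finsetSum_apply, Finsupp.single_apply]

lemma sqfreeExponent_injective : Function.Injective (sqfreeExponent (σ := σ)) := by
  classical
  intro s t h
  ext j
  have := DFunLike.congr_fun h j
  simp only [sqfreeExponent_apply] at this
  split_ifs at this <;> simp_all

lemma monomial_sqfreeExponent [CommSemiring R] (s : Finset σ) :
    monomial (sqfreeExponent s) (1 : R) = ∏ i ∈ s, X i :=
  monomial_sum_one s _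

lemma coeff_sqfreeExponent_eq_zero_of_mem_span [CommSemiring R] {p : MvPolynomial σ R}
    (hp : p ∈ Ideal.span (Set.range fun i => (X i : MvPolynomial σ R) ^ 2)) (s : Finset σ) :
    coeff (sqfreeExponent s) p = 0 := by
  classical
  rw [show Set.range (fun i => (X i : MvPolynomial σ R) ^ 2)
      = (fun d => monomial d 1) '' Set.range (fun i => Finsupp.single i 2) by
      simp [← Set.range_comp, Function.comp_def, X_pow_eq_monomial],
    mem_ideal_span_monomial_image] at hp
  by_contra hs
  obtain ⟨_, ⟨i, rfl⟩, hle⟩ := hp _ (mem_support_iff.mpr hs)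
  have := Finsupp.single_le_iff.mp hle
  rw [sqfreeExponent_apply] at this
  split_ifs at this <;> omega

end SquarefreeExponent

section SquareFreeAlgebra

variable {F : Type*} [Field F] {n : ℕ}

noncomputable def sfMk : MvPolynomial (Fin n) F →ₐ[F] SquareFreeAlgebra F n :=
  Ideal.Quotient.mkₐ F _

variable (F) in
noncomputable def sfMonomial (s : Finset (Fin n)) : SquareFreeAlgebra F n := ∏ i ∈ s, sfVar i

lemma sfMk_prod_X (s : Finset (Fin n)) : sfMk (∏ i ∈ s, X i) = sfMonomial F s := by
  rw [map_prod]
  rfl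

lemma sfVar_mul_self (i : Fin n) : sfVar i * sfVar i = (0 : SquareFreeAlgebra F n) := by
  rw [← sq]
  exact Ideal.Quotient.eq_zero_iff_mem.mpr (Ideal.subset_span ⟨i, rfl⟩)

lemma sfVar_mul_sfMonomial_of_mem {s : Finset (Fin n)} {i : Fin n} (hi : i ∈ s) :
    sfVar i * sfMonomial F s = 0 := by
  rw [sfMonomial, ← Finset.mul_prod_erase s _ hi, ← mul_assoc, sfVar_mul_self, zero_mul]

lemma sfVar_mul_sfMonomial_of_notMem {s : Finset (Fin n)} {i : Fin n} (hi : i ∉ s) :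
    sfVar i * sfMonomial F s = sfMonomial F (insert i s) :=
  (Finset.prod_insert hi).symm

lemma sum_sfVar_mul_sfMonomial (s : Finset (Fin n)) :
    (∑ i, sfVar i) * sfMonomial F s = ∑ i ∈ sᶜ, sfMonomial F (insert i s) := by
  -- `rw [Finset.sum_mul]` fails on `SquareFreeAlgebra`: its ring structure only unfolds to the
  -- quotient's at default transparency, so distributivity is applied as a term.
  calc (∑ i, sfVar i) * sfMonomial F s = ∑ i, sfVar i * sfMonomial F s := Finset.sum_mul _ _ _
    _ = ∑ i ∈ sᶜ, sfVar i * sfMonomial F s :=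
      (Finset.sum_subset (Finset.subset_univ _) fun i _ hi =>
        sfVar_mul_sfMonomial_of_mem (by simpa using hi)).symm
    _ = ∑ i ∈ sᶜ, sfMonomial F (insert i s) :=
      Finset.sum_congr rfl fun i hi => sfVar_mul_sfMonomial_of_notMem (Finset.mem_compl.mp hi)

lemma linearCombination_sfMonomial_injective :
    Function.Injective (Fintype.linearCombination F (sfMonomial F (n := n))) := by
  intro f g hfg
  let lift : (Finset (Fin n) → F) → MvPolynomial (Fin n) F :=
    fun f => ∑ s, monomial (sqfreeExponent s) (f s)
  have sfMk_lift (f) : sfMk (lift f) = Fintype.linearCombination F (sfMonomial F) f := by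
    simp [lift, Fintype.linearCombination_apply, ← sfMk_prod_X, ← monomial_sqfreeExponent,
      ← map_smul]
  have coeff_lift (f t) : coeff (sqfreeExponent t) (lift f) = f t := by
    simp [lift, coeff_sum, coeff_monomial, sqfreeExponent_injective.eq_iff]
  rw [← sfMk_lift, ← sfMk_lift] at hfg
  have hmem := Ideal.Quotient.eq.mp hfg
  funext t
  have := coeff_sqfreeExponent_eq_zero_of_mem_span hmem t
  rwa [coeff_sub, coeff_lift, coeff_lift, sub_eq_zero] at this

lemma sum_sfVar_mul_linearCombination (f : Finset (Fin n) → F) :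
    (∑ i, sfVar i) * Fintype.linearCombination F (sfMonomial F) f
      = Fintype.linearCombination F (sfMonomial F) (up f) := by
  calc (∑ i, sfVar i) * Fintype.linearCombination F (sfMonomial F) f
      = ∑ s, f s • ((∑ i, sfVar i) * sfMonomial F s) := by
        rw [Fintype.linearCombination_apply]
        exact (Finset.mul_sum _ _ _).trans
          (Finset.sum_congr rfl fun s _ => mul_smul_comm _ _ _)
    _ = ∑ s, ∑ i ∈ sᶜ, f s • sfMonomial F (insert i s) := by
        simp only [sum_sfVar_mul_sfMonomial, Finset.smul_sum]
    _ = ∑ t, ∑ j ∈ t, f (t.erase j) • sfMonomial F t :=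
        sum_sum_compl_insert fun s t => f s • sfMonomial F t
    _ = Fintype.linearCombination F (sfMonomial F) (up f) := by
        simp only [Fintype.linearCombination_apply, up_apply, Finset.sum_smul]

lemma sum_sfVar_pow_mul_linearCombination (m : ℕ) (f : Finset (Fin n) → F) :
    (∑ i, sfVar i) ^ m * Fintype.linearCombination F (sfMonomial F) f
      = Fintype.linearCombination F (sfMonomial F) ((up ^ m) f) := by
  induction m generalizing f with
  | zero => rw [pow_zero, pow_zero, one_mul, Module.End.one_apply]
  | succ m ih =>
    rw [pow_succ, mul_assoc, sum_sfVar_mul_linearCombination, ih, pow_succ, Module.End.mul_apply]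

noncomputable def gradeEquivSfGrade (k : ℕ) : grade F (Fin n) k ≃ₗ[F] sfGrade F n k :=
  (Submodule.equivMapOfInjective _ linearCombination_sfMonomial_injective _).trans
    (LinearEquiv.ofEq _ _ (map_linearCombination_grade _ k))

lemma coe_gradeEquivSfGrade_apply (k : ℕ) (f : grade F (Fin n) k) :
    (gradeEquivSfGrade k f : SquareFreeAlgebra F n)
      = Fintype.linearCombination F (sfMonomial F) f :=
  rfl

end SquareFreeAlgebra

/-- Strong Lefschetz for the quadratic monomial complete intersection: with
`l = x_1 + ⋯ + x_n`, the multiplication map `×l^(n-2k) : A_k → A_{n-k}` is bijective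
for all `0 ≤ k ≤ ⌊n/2⌋`, i.e. it is realised by a linear equivalence. -/
theorem squarefree_strong_lefschetz {F : Type*} [Field F] [CharZero F] (n : ℕ)
    (l : SquareFreeAlgebra F n) (hl : l = ∑ i : Fin n, sfVar i) :
    ∀ k : ℕ, 2 * k ≤ n →
      ∃ e : sfGrade F n k ≃ₗ[F] sfGrade F n (n - k),
        ∀ v : sfGrade F n k, (e v : SquareFreeAlgebra F n) = l ^ (n - 2 * k) * v := by
  subst hl
  intro k hk
  have hk' : 2 * k ≤ Fintype.card (Fin n) := by simpa using hk
  refine ⟨(gradeEquivSfGrade k).symm ≪≫ₗ upPowEquiv hk' ≪≫ₗ gradeEquivSfGrade _ ≪≫ₗ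
    LinearEquiv.ofEq _ _ (by rw [Fintype.card_fin]), fun v => ?_⟩
  obtain ⟨f, rfl⟩ := (gradeEquivSfGrade k).surjective v
  simp [coe_gradeEquivSfGrade_apply, coe_upPowEquiv_apply, sum_sfVar_pow_mul_linearCombination]
end
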